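/- Let y_F be the linear chain with nearest-neighbor spacing Fε and suppose φ'(2F) ≥ 0 and φ''(2F) ≤ 0. Set A = φ''(F) + 4 φ''(2F). Then for every u ∈ 𝒰, δ²E^QNL(y_F)[u,u] ≥ min{ A, φ'(F)/F } ‖u'‖²_{ℓ²_ε(𝔄)} + min{ A, (φ'(F) + 2 φ'(2F))/F } ‖u'‖²_{ℓ²_ε(ℭ)} + min{ A, (φ'(F) + φ'(2F))/F } ‖u'‖²_{ℓ²_ε(ℑ)}, and consequently δ²E^QNL(y_F)[u,u] ≥ min{ A, φ'(F)/F } ‖u'‖²_{ℓ²_ε}. -/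

import Mathlib

noncomputable section

open Real Finset

/-- Euclidean norm on `ℝ × ℝ`. -/
def enorm2 (v : ℝ × ℝ) : ℝ := Real.sqrt (v.1 ^ 2 + v.2 ^ 2)

/-- Euclidean dot product on `ℝ × ℝ`. -/
def edot (v w : ℝ × ℝ) : ℝ := v.1 * w.1 + v.2 * w.2

/-- `N`-periodic mean-zero displacements (the space `𝒰`). -/
def IsDisp (N : ℕ) (u : ℤ → ℝ × ℝ) : Prop :=
  (∀ ℓ : ℤ, u (ℓ + (N : ℤ)) = u ℓ) ∧ ∑ ℓ ∈ Finset.Icc (1 : ℤ) (N : ℤ), u ℓ = 0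

/-- Constrained displacements (the space `𝒰̃`): second component vanishes. -/
def IsDisp1D (N : ℕ) (u : ℤ → ℝ × ℝ) : Prop :=
  IsDisp N u ∧ ∀ ℓ : ℤ, (u ℓ).2 = 0

/-- Backward difference `u'_ℓ = (u_ℓ - u_{ℓ-1})/ε`. -/
def bd (ε : ℝ) (u : ℤ → ℝ × ℝ) (ℓ : ℤ) : ℝ × ℝ := ε⁻¹ • (u ℓ - u (ℓ - 1))

/-- The inner product `⟨v,w⟩ = ε ∑_{ℓ=1}^N v_ℓ · w_ℓ`. -/
def ip (N : ℕ) (ε : ℝ) (v w : ℤ → ℝ × ℝ) : ℝ :=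
  ε * ∑ ℓ ∈ Finset.Icc (1 : ℤ) (N : ℤ), edot (v ℓ) (w ℓ)

/-- The norm `‖v‖_{ℓ²_ε}`. -/
def nrm (N : ℕ) (ε : ℝ) (v : ℤ → ℝ × ℝ) : ℝ :=
  Real.sqrt (ε * ∑ ℓ ∈ Finset.Icc (1 : ℤ) (N : ℤ), (enorm2 (v ℓ)) ^ 2)

/-- The atomistic energy `E^a`. -/
def Ea (N : ℕ) (ε : ℝ) (φ : ℝ → ℝ) (y : ℤ → ℝ × ℝ) : ℝ :=
  ε * ∑ ℓ ∈ Finset.Icc (1 : ℤ) (N : ℤ),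
    (φ (enorm2 (bd ε y ℓ)) + φ (enorm2 (bd ε y (ℓ + 1) + bd ε y ℓ)))

/-- The Cauchy–Born energy `E^CB`. -/
def ECB (N : ℕ) (ε : ℝ) (φ : ℝ → ℝ) (y : ℤ → ℝ × ℝ) : ℝ :=
  ε * ∑ ℓ ∈ Finset.Icc (1 : ℤ) (N : ℤ),
    (φ (enorm2 (bd ε y ℓ)) + φ (2 * enorm2 (bd ε y ℓ)))

/-- The bond-angle energy `E^b`. -/
def Eb (N : ℕ) (ε α : ℝ) (y : ℤ → ℝ × ℝ) : ℝ :=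
  ε * ∑ ℓ ∈ Finset.Icc (1 : ℤ) (N : ℤ),
    α * (1 - edot (bd ε y (ℓ + 1)) (bd ε y ℓ) /
      (enorm2 (bd ε y (ℓ + 1)) * enorm2 (bd ε y ℓ)))

/-- The quasi-nonlocal energy `E^QNL`. -/
def EQNL (N K : ℕ) (ε : ℝ) (φ : ℝ → ℝ) (y : ℤ → ℝ × ℝ) : ℝ :=
  ε * ∑ ℓ ∈ Finset.Icc (1 : ℤ) (N : ℤ), φ (enorm2 (bd ε y ℓ))
  + ε * ∑ ℓ ∈ Finset.Icc (1 : ℤ) (K : ℤ), φ (enorm2 (bd ε y (ℓ + 1) + bd ε y ℓ))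
  + ε * ∑ ℓ ∈ Finset.Icc ((K : ℤ) + 2) (N : ℤ), φ (2 * enorm2 (bd ε y ℓ))
  + ε / 2 * φ (2 * enorm2 (bd ε y 1)) + ε / 2 * φ (2 * enorm2 (bd ε y ((K : ℤ) + 1)))

/-- First variation `δE(y)[u] = (d/dt) E(y + t u) |_{t=0}`. -/
def dE (E : (ℤ → ℝ × ℝ) → ℝ) (y u : ℤ → ℝ × ℝ) : ℝ :=
  deriv (fun t : ℝ => E (fun ℓ => y ℓ + t • u ℓ)) 0

/-- Second variation `δ²E(y)[u,v] = (∂²/∂t∂s) E(y + t u + s v) |_{t=s=0}`. -/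
def d2E (E : (ℤ → ℝ × ℝ) → ℝ) (y u v : ℤ → ℝ × ℝ) : ℝ :=
  deriv (fun s : ℝ => deriv (fun t : ℝ => E (fun ℓ => y ℓ + t • u ℓ + s • v ℓ)) 0) 0

/-- The linear chain `y_{F,ℓ} = (Fεℓ, 0)`. -/
def yLin (ε F : ℝ) : ℤ → ℝ × ℝ := fun ℓ => (F * ε * ℓ, 0)

/-- The uniform circular chain of radius `R = Fε/(2 sin(πε))`. -/
def yCirc (ε F : ℝ) : ℤ → ℝ × ℝ := fun ℓ =>
  (F * ε / (2 * Real.sin (π * ε)) * Real.cos (2 * π * ε * ℓ),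
   F * ε / (2 * Real.sin (π * ε)) * Real.sin (2 * π * ε * ℓ))

/-!
Along the line `y_F + x u` every bond of `y_F` has the form `(r, 0) + x b` with `r ∈ {F, 2F}`
and `b` built from the backward differences of `u`, so `δ²E^QNL(y_F)[u,u]` is `ε` times a sum of
bond Hessians `φ''(r) b₁² + φ'(r) b₂² / r`; the second term comes from the curvature of the
Euclidean norm. Since `φ''(2F) ≤ 0 ≤ φ'(2F)`, every second-neighbour bond of the atomistic region
contributes at least `2 φ''(2F) (b'₁² + b₁²)`, which splits it between the two sites it spans.
Each site `ℓ` then contributes at least `min(A, ·) ‖u'_ℓ‖²`, the transverse coefficient depending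
on the region of `ℓ`, and the atomistic one is the smallest of the three.
-/

open Filter Topology

theorem iteratedDeriv_two_comp {f g : ℝ → ℝ} {x : ℝ} (hf : ContDiffAt ℝ 2 f (g x))
    (hg : ContDiffAt ℝ 2 g x) :
    iteratedDeriv 2 (f ∘ g) x =
      iteratedDeriv 2 f (g x) * deriv g x ^ 2 + deriv f (g x) * iteratedDeriv 2 g x := by
  simp only [iteratedDeriv_succ, iteratedDeriv_zero]
  have hderiv : deriv (f ∘ g) =ᶠ[𝓝 x] fun y => deriv f (g y) * deriv g y := by
    filter_upwards [hg.eventually (by simp), hg.continuousAt.eventually (hf.eventually (by simp))]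
      with y hgy hfy
    exact deriv_comp y (hfy.differentiableAt (by simp)) (hgy.differentiableAt (by simp))
  have hf' : DifferentiableAt ℝ (deriv f) (g x) :=
    (hf.derivWithin (m := 1) (by norm_num)).differentiableAt one_ne_zero
  have hg' : DifferentiableAt ℝ (deriv g) x :=
    (hg.derivWithin (m := 1) (by norm_num)).differentiableAt one_ne_zero
  have hprod : HasDerivAt (fun y => deriv f (g y) * deriv g y)
      (deriv (deriv f) (g x) * deriv g x * deriv g x + deriv f (g x) * deriv (deriv g) x) x :=
    (hf'.hasDerivAt.comp x (hg.differentiableAt two_ne_zero).hasDerivAt).mul hg'.hasDerivAt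
  rw [hderiv.deriv_eq, hprod.deriv]
  ring

lemma enorm2_sq (v : ℝ × ℝ) : enorm2 v ^ 2 = v.1 ^ 2 + v.2 ^ 2 :=
  Real.sq_sqrt (by positivity)

lemma enorm2_smul (c : ℝ) (v : ℝ × ℝ) : enorm2 (c • v) = |c| * enorm2 v := by
  simp only [enorm2, Prod.smul_fst, Prod.smul_snd, smul_eq_mul]
  rw [← Real.sqrt_sq_eq_abs, ← Real.sqrt_mul (sq_nonneg c)]
  ring_nf

def enorm2Line (r : ℝ) (b : ℝ × ℝ) (x : ℝ) : ℝ := enorm2 ((r, 0) + x • b)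

section enorm2Line

variable {r : ℝ} (b : ℝ × ℝ)

lemma sq_enorm2Line (x : ℝ) : enorm2Line r b x ^ 2 = (r + x * b.1) ^ 2 + (x * b.2) ^ 2 := by
  simp [enorm2Line, enorm2_sq]

lemma enorm2Line_zero (hr : 0 ≤ r) : enorm2Line r b 0 = r := by
  simp [enorm2Line, enorm2, Real.sqrt_sq hr]

lemma two_mul_enorm2Line (x : ℝ) :
    2 * enorm2Line r b x = enorm2Line (2 * r) ((2 : ℝ) • b) x := by
  have h : ((2 * r, 0) : ℝ × ℝ) + x • (2 : ℝ) • b = (2 : ℝ) • ((r, 0) + x • b) := by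
    ext <;> simp only [Prod.fst_add, Prod.snd_add, Prod.smul_fst, Prod.smul_snd, smul_eq_mul] <;>
      ring
  rw [enorm2Line, enorm2Line, h, enorm2_smul, abs_two]

lemma contDiffAt_enorm2Line {n : WithTop ℕ∞} (hr : r ≠ 0) :
    ContDiffAt ℝ n (enorm2Line r b) 0 := by
  have h : enorm2Line r b = (fun q => √q) ∘ fun x => (r + x * b.1) ^ 2 + (x * b.2) ^ 2 := by
    ext x
    simp [enorm2Line, enorm2]
  rw [h]
  exact (Real.contDiffAt_sqrt (by simpa using hr)).comp (0 : ℝ) (by fun_prop)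

lemma hasDerivAt_sq_enorm2Line (x : ℝ) :
    HasDerivAt (fun x => enorm2Line r b x ^ 2)
      (2 * (r + x * b.1) * b.1 + 2 * (x * b.2) * b.2) x := by
  have h1 : HasDerivAt (fun x => r + x * b.1) b.1 x := (hasDerivAt_mul_const b.1).const_add r
  have h2 : HasDerivAt (fun x => x * b.2) b.2 x := hasDerivAt_mul_const b.2
  simp only [sq_enorm2Line]
  exact ((h1.fun_pow 2).add (h2.fun_pow 2)).congr_deriv (by ring)

lemma deriv_enorm2Line (hr : 0 < r) : deriv (enorm2Line r b) 0 = b.1 := by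
  have hn : HasDerivAt (enorm2Line r b) (deriv (enorm2Line r b) 0) 0 :=
    ((contDiffAt_enorm2Line b hr.ne' (n := 1)).differentiableAt one_ne_zero).hasDerivAt
  have h := (hn.pow 2).unique (hasDerivAt_sq_enorm2Line b 0)
  norm_num [enorm2Line_zero b hr.le] at h
  exact h.resolve_right hr.ne'

/-- Differentiating `n² = (r + x b₁)² + (x b₂)²` twice gives `2 n'² + 2 n n'' = 2 ‖b‖²`. -/
lemma iteratedDeriv_two_enorm2Line (hr : 0 < r) :
    iteratedDeriv 2 (enorm2Line r b) 0 = b.2 ^ 2 / r := by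
  have hsq : HasDerivAt (deriv fun x => enorm2Line r b x ^ 2) (2 * b.1 ^ 2 + 2 * b.2 ^ 2) 0 := by
    have h1 : HasDerivAt (fun x => r + x * b.1) b.1 0 := (hasDerivAt_mul_const b.1).const_add r
    have h2 : HasDerivAt (fun x => x * b.2) b.2 0 := hasDerivAt_mul_const b.2
    rw [show (deriv fun x => enorm2Line r b x ^ 2) = _ from
      funext fun x => (hasDerivAt_sq_enorm2Line b x).deriv]
    exact (((h1.const_mul 2).mul_const b.1).add ((h2.const_mul 2).mul_const b.2)).congr_deriv
      (by ring)
  have h := iteratedDeriv_two_comp (f := fun z : ℝ => z ^ 2) (by fun_prop)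
    (contDiffAt_enorm2Line b hr.ne' (n := 2))
  simp only [Function.comp_def, enorm2Line_zero b hr.le, deriv_enorm2Line b hr] at h
  rw [iteratedDeriv_succ, iteratedDeriv_one, hsq.deriv] at h
  norm_num at h
  rw [eq_div_iff hr.ne']
  linarith

end enorm2Line

def bondHess (φ : ℝ → ℝ) (r : ℝ) (b : ℝ × ℝ) : ℝ :=
  deriv (deriv φ) r * b.1 ^ 2 + deriv φ r * b.2 ^ 2 / r

section bondHess

variable {φ : ℝ → ℝ} {r : ℝ}

lemma contDiffAt_comp_enorm2Line (b : ℝ × ℝ) (hφ : ContDiffAt ℝ 2 φ r) (hr : 0 < r) :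
    ContDiffAt ℝ 2 (fun x => φ (enorm2Line r b x)) 0 := by
  rw [← enorm2Line_zero b hr.le] at hφ
  exact hφ.comp 0 (contDiffAt_enorm2Line b hr.ne')

lemma iteratedDeriv_two_comp_enorm2Line (b : ℝ × ℝ) (hφ : ContDiffAt ℝ 2 φ r) (hr : 0 < r) :
    iteratedDeriv 2 (fun x => φ (enorm2Line r b x)) 0 = bondHess φ r b := by
  rw [← enorm2Line_zero b hr.le] at hφ
  rw [← Function.comp_def, iteratedDeriv_two_comp hφ (contDiffAt_enorm2Line b hr.ne'),
    enorm2Line_zero b hr.le, deriv_enorm2Line b hr, iteratedDeriv_two_enorm2Line b hr, bondHess,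
    iteratedDeriv_succ, iteratedDeriv_one]
  ring

variable {ι : Type*} (c : ℝ) (s : Finset ι) (v : ι → ℝ × ℝ)

lemma contDiffAt_mul_sum_comp_enorm2Line (hφ : ContDiffAt ℝ 2 φ r) (hr : 0 < r) :
    ContDiffAt ℝ 2 (fun x => c * ∑ i ∈ s, φ (enorm2Line r (v i) x)) 0 :=
  contDiffAt_const.mul (ContDiffAt.sum fun i _ => contDiffAt_comp_enorm2Line (v i) hφ hr)

lemma iteratedDeriv_two_mul_sum_comp_enorm2Line (hφ : ContDiffAt ℝ 2 φ r) (hr : 0 < r) :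
    iteratedDeriv 2 (fun x => c * ∑ i ∈ s, φ (enorm2Line r (v i) x)) 0 =
      c * ∑ i ∈ s, bondHess φ r (v i) := by
  rw [iteratedDeriv_const_mul_field,
    iteratedDeriv_fun_sum fun i _ => contDiffAt_comp_enorm2Line (v i) hφ hr]
  simp only [iteratedDeriv_two_comp_enorm2Line _ hφ hr]

end bondHess

lemma d2E_self (E : (ℤ → ℝ × ℝ) → ℝ) (y u : ℤ → ℝ × ℝ) :
    d2E E y u u = iteratedDeriv 2 (fun x : ℝ => E (fun ℓ => y ℓ + x • u ℓ)) 0 := by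
  set g := fun x : ℝ => E (fun ℓ => y ℓ + x • u ℓ)
  have h (s : ℝ) : deriv (fun t : ℝ => E (fun ℓ => y ℓ + t • u ℓ + s • u ℓ)) 0 = deriv g s := by
    simpa [g, add_smul, add_assoc] using deriv_comp_add_const (f := g) (a := s) (x := 0)
  simp only [d2E, h, iteratedDeriv_succ, iteratedDeriv_zero]

lemma bd_add_smul (ε x : ℝ) (y u : ℤ → ℝ × ℝ) (ℓ : ℤ) :
    bd ε (fun m => y m + x • u m) ℓ = bd ε y ℓ + x • bd ε u ℓ := by
  simp only [bd]
  module

lemma bd_yLin {ε : ℝ} (hε : ε ≠ 0) (F : ℝ) (ℓ : ℤ) : bd ε (yLin ε F) ℓ = (F, 0) := by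
  simp only [bd, yLin, Prod.mk_sub_mk, Prod.smul_mk, smul_eq_mul, sub_self, mul_zero]
  congr 1
  field_simp
  push_cast
  ring

lemma EQNL_yLin_add_smul {ε : ℝ} (hε : ε ≠ 0) (N K : ℕ) (φ : ℝ → ℝ) (F : ℝ)
    (u : ℤ → ℝ × ℝ) (x : ℝ) :
    EQNL N K ε φ (fun ℓ => yLin ε F ℓ + x • u ℓ) =
      ε * ∑ ℓ ∈ Icc (1 : ℤ) N, φ (enorm2Line F (bd ε u ℓ) x)
      + ε * ∑ ℓ ∈ Icc (1 : ℤ) K, φ (enorm2Line (2 * F) (bd ε u (ℓ + 1) + bd ε u ℓ) x)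
      + ε * ∑ ℓ ∈ Icc ((K : ℤ) + 2) N, φ (enorm2Line (2 * F) ((2 : ℝ) • bd ε u ℓ) x)
      + ε / 2 * φ (enorm2Line (2 * F) ((2 : ℝ) • bd ε u 1) x)
      + ε / 2 * φ (enorm2Line (2 * F) ((2 : ℝ) • bd ε u (K + 1)) x) := by
  have hbond (ℓ : ℤ) : bd ε (fun m => yLin ε F m + x • u m) ℓ = (F, 0) + x • bd ε u ℓ := by
    rw [bd_add_smul, bd_yLin hε]
  have hpair (ℓ : ℤ) : bd ε (fun m => yLin ε F m + x • u m) (ℓ + 1)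
      + bd ε (fun m => yLin ε F m + x • u m) ℓ = (2 * F, 0) + x • (bd ε u (ℓ + 1) + bd ε u ℓ) := by
    rw [hbond, hbond]
    ext <;> simp only [Prod.fst_add, Prod.snd_add, Prod.smul_fst, Prod.smul_snd, smul_eq_mul] <;>
      ring
  simp only [EQNL, hpair]
  simp only [hbond, ← two_mul_enorm2Line]
  rfl

/-- The continuum bond `φ(2‖y'_ℓ‖)` enters as a bond of reference length `2F` and direction
`2 u'_ℓ`. -/
def qnlHessian (φ : ℝ → ℝ) (N K : ℕ) (F : ℝ) (w : ℤ → ℝ × ℝ) : ℝ :=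
  ∑ ℓ ∈ Icc (1 : ℤ) N, bondHess φ F (w ℓ)
  + ∑ ℓ ∈ Icc (1 : ℤ) K, bondHess φ (2 * F) (w (ℓ + 1) + w ℓ)
  + ∑ ℓ ∈ Icc ((K : ℤ) + 2) N, bondHess φ (2 * F) ((2 : ℝ) • w ℓ)
  + bondHess φ (2 * F) ((2 : ℝ) • w 1) / 2
  + bondHess φ (2 * F) ((2 : ℝ) • w (K + 1)) / 2

lemma d2E_EQNL_yLin {ε : ℝ} (hε : ε ≠ 0) (N K : ℕ) {φ : ℝ → ℝ}
    (hφ : ContDiffOn ℝ 2 φ (Set.Ioi 0)) {F : ℝ} (hF : 0 < F) (u : ℤ → ℝ × ℝ) :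
    d2E (EQNL N K ε φ) (yLin ε F) u u = ε * qnlHessian φ N K F (bd ε u) := by
  have hF2 : 0 < 2 * F := by positivity
  have hφF := hφ.contDiffAt (Ioi_mem_nhds hF)
  have hφ2F := hφ.contDiffAt (Ioi_mem_nhds hF2)
  have hA := contDiffAt_mul_sum_comp_enorm2Line ε (Icc (1 : ℤ) N) (bd ε u) hφF hF
  have hB := contDiffAt_mul_sum_comp_enorm2Line ε (Icc (1 : ℤ) K)
    (fun ℓ => bd ε u (ℓ + 1) + bd ε u ℓ) hφ2F hF2
  have hC := contDiffAt_mul_sum_comp_enorm2Line ε (Icc ((K : ℤ) + 2) N)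
    (fun ℓ => (2 : ℝ) • bd ε u ℓ) hφ2F hF2
  have hD := contDiffAt_const (c := ε / 2).mul
    (contDiffAt_comp_enorm2Line ((2 : ℝ) • bd ε u 1) hφ2F hF2)
  have hE := contDiffAt_const (c := ε / 2).mul
    (contDiffAt_comp_enorm2Line ((2 : ℝ) • bd ε u (K + 1)) hφ2F hF2)
  rw [d2E_self, funext (EQNL_yLin_add_smul hε N K φ F u),
    iteratedDeriv_fun_add (((hA.add hB).add hC).add hD) hE,
    iteratedDeriv_fun_add ((hA.add hB).add hC) hD, iteratedDeriv_fun_add (hA.add hB) hC,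
    iteratedDeriv_fun_add hA hB, iteratedDeriv_two_mul_sum_comp_enorm2Line _ _ _ hφF hF,
    iteratedDeriv_two_mul_sum_comp_enorm2Line _ _ _ hφ2F hF2,
    iteratedDeriv_two_mul_sum_comp_enorm2Line _ _ _ hφ2F hF2,
    iteratedDeriv_const_mul_field, iteratedDeriv_const_mul_field,
    iteratedDeriv_two_comp_enorm2Line _ hφ2F hF2, iteratedDeriv_two_comp_enorm2Line _ hφ2F hF2,
    qnlHessian]
  ring

lemma sum_Icc_split (f : ℤ → ℝ) {a b c : ℤ} (hab : a ≤ b + 1) (hbc : b ≤ c) :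
    ∑ ℓ ∈ Icc a c, f ℓ = ∑ ℓ ∈ Icc a b, f ℓ + ∑ ℓ ∈ Icc (b + 1) c, f ℓ := by
  rw [← sum_union (disjoint_left.mpr fun x hx hx' => by simp only [mem_Icc] at hx hx'; omega)]
  congr 1
  ext x
  simp only [mem_union, mem_Icc]
  omega

lemma sum_Icc_one_split (f : ℤ → ℝ) {K N : ℤ} (hK : 1 ≤ K) (hKN : K + 1 ≤ N) :
    ∑ ℓ ∈ Icc 1 N, f ℓ = f 1 + ∑ ℓ ∈ Icc 2 K, f ℓ + f (K + 1) + ∑ ℓ ∈ Icc (K + 2) N, f ℓ := by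
  have h1 := sum_Icc_split f (a := 1) (b := 1) (c := N) (by norm_num) (by omega)
  have h2 := sum_Icc_split f (a := 2) (b := K) (c := N) (by omega) (by omega)
  have h3 := sum_Icc_split f (a := K + 1) (b := K + 1) (c := N) (by omega) hKN
  norm_num [add_assoc] at h1 h3
  linarith

lemma sum_Icc_one_pair (f : ℤ → ℝ) {K : ℤ} (hK : 1 ≤ K) :
    ∑ ℓ ∈ Icc 1 K, (f (ℓ + 1) + f ℓ) = f 1 + f (K + 1) + 2 * ∑ ℓ ∈ Icc 2 K, f ℓ := by
  have hshift : ∑ ℓ ∈ Icc 1 K, f (ℓ + 1) = ∑ ℓ ∈ Icc (1 + 1) (K + 1), f ℓ := by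
    rw [← map_add_right_Icc, sum_map]
    rfl
  have h1 := sum_Icc_split f (a := 1) (b := 1) (c := K) (by norm_num) hK
  have h2 := sum_Icc_split f (a := 2) (b := K) (c := K + 1) (by omega) (by omega)
  norm_num at hshift h1 h2
  rw [sum_add_distrib, hshift]
  linarith

lemma min_mul_enorm2_sq_le (α β : ℝ) (b : ℝ × ℝ) :
    min α β * enorm2 b ^ 2 ≤ α * b.1 ^ 2 + β * b.2 ^ 2 := by
  rw [enorm2_sq, mul_add]
  gcongr
  exacts [min_le_left α β, min_le_right α β]

section SiteBounds

variable {φ : ℝ → ℝ} {F : ℝ}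

lemma atomistic_site_le (hF : 0 < F) (b : ℝ × ℝ) :
    min (deriv (deriv φ) F + 4 * deriv (deriv φ) (2 * F)) (deriv φ F / F) * enorm2 b ^ 2
      ≤ bondHess φ F b + 4 * deriv (deriv φ) (2 * F) * b.1 ^ 2 :=
  (min_mul_enorm2_sq_le _ _ b).trans_eq <| by
    simp only [bondHess]
    field_simp
    ring

lemma continuum_site_le (hF : 0 < F) (b : ℝ × ℝ) :
    min (deriv (deriv φ) F + 4 * deriv (deriv φ) (2 * F))
        ((deriv φ F + 2 * deriv φ (2 * F)) / F) * enorm2 b ^ 2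
      ≤ bondHess φ F b + bondHess φ (2 * F) ((2 : ℝ) • b) :=
  (min_mul_enorm2_sq_le _ _ b).trans_eq <| by
    simp only [bondHess, Prod.smul_fst, Prod.smul_snd, smul_eq_mul]
    field_simp
    ring

lemma interface_site_le (hF : 0 < F) (b : ℝ × ℝ) :
    min (deriv (deriv φ) F + 4 * deriv (deriv φ) (2 * F))
        ((deriv φ F + deriv φ (2 * F)) / F) * enorm2 b ^ 2
      ≤ bondHess φ F b + 2 * deriv (deriv φ) (2 * F) * b.1 ^ 2
        + bondHess φ (2 * F) ((2 : ℝ) • b) / 2 :=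
  (min_mul_enorm2_sq_le _ _ b).trans_eq <| by
    simp only [bondHess, Prod.smul_fst, Prod.smul_snd, smul_eq_mul]
    field_simp
    ring

lemma pair_bondHess_ge (hF : 0 < F) (hφ1 : 0 ≤ deriv φ (2 * F))
    (hφ2 : deriv (deriv φ) (2 * F) ≤ 0) (b b' : ℝ × ℝ) :
    2 * deriv (deriv φ) (2 * F) * (b'.1 ^ 2 + b.1 ^ 2) ≤ bondHess φ (2 * F) (b' + b) := by
  have hdiff : deriv (deriv φ) (2 * F) * (b'.1 - b.1) ^ 2 ≤ 0 :=
    mul_nonpos_of_nonpos_of_nonneg hφ2 (sq_nonneg _)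
  have htrans : 0 ≤ deriv φ (2 * F) * (b'.2 + b.2) ^ 2 / (2 * F) := by positivity
  simp only [bondHess, Prod.fst_add, Prod.snd_add]
  nlinarith

lemma qnlHessian_ge (hF : 0 < F) (hφ1 : 0 ≤ deriv φ (2 * F))
    (hφ2 : deriv (deriv φ) (2 * F) ≤ 0) {N K : ℕ} (hK : 1 ≤ (K : ℤ)) (hKN : (K : ℤ) + 1 ≤ N)
    (w : ℤ → ℝ × ℝ) :
    min (deriv (deriv φ) F + 4 * deriv (deriv φ) (2 * F)) (deriv φ F / F) *
        ∑ ℓ ∈ Icc (2 : ℤ) K, enorm2 (w ℓ) ^ 2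
      + min (deriv (deriv φ) F + 4 * deriv (deriv φ) (2 * F))
          ((deriv φ F + 2 * deriv φ (2 * F)) / F) *
        ∑ ℓ ∈ Icc ((K : ℤ) + 2) N, enorm2 (w ℓ) ^ 2
      + min (deriv (deriv φ) F + 4 * deriv (deriv φ) (2 * F))
          ((deriv φ F + deriv φ (2 * F)) / F) *
        (enorm2 (w 1) ^ 2 + enorm2 (w (K + 1)) ^ 2)
      ≤ qnlHessian φ N K F w := by
  have hbulk := sum_Icc_one_split (fun ℓ => bondHess φ F (w ℓ)) hK hKN
  have hpair : 2 * deriv (deriv φ) (2 * F) *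
        ((w 1).1 ^ 2 + (w (K + 1)).1 ^ 2 + 2 * ∑ ℓ ∈ Icc (2 : ℤ) K, (w ℓ).1 ^ 2)
      ≤ ∑ ℓ ∈ Icc (1 : ℤ) K, bondHess φ (2 * F) (w (ℓ + 1) + w ℓ) := by
    rw [← sum_Icc_one_pair (fun ℓ => (w ℓ).1 ^ 2) hK, mul_sum]
    exact sum_le_sum fun ℓ _ => pair_bondHess_ge hF hφ1 hφ2 _ _
  have hatom := sum_le_sum fun ℓ (_ : ℓ ∈ Icc (2 : ℤ) K) => atomistic_site_le (φ := φ) hF (w ℓ)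
  have hcont := sum_le_sum fun ℓ (_ : ℓ ∈ Icc ((K : ℤ) + 2) N) =>
    continuum_site_le (φ := φ) hF (w ℓ)
  have hint₁ := interface_site_le (φ := φ) hF (w 1)
  have hint₂ := interface_site_le (φ := φ) hF (w (K + 1))
  rw [← mul_sum, sum_add_distrib, ← mul_sum] at hatom
  rw [← mul_sum, sum_add_distrib] at hcont
  unfold qnlHessian
  linarith

end SiteBounds

lemma min_div_le_min_add_div (α p : ℝ) {F q : ℝ} (hF : 0 < F) (hq : 0 ≤ q) :
    min α (p / F) ≤ min α ((p + q) / F) :=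
  min_le_min_left α (div_le_div_of_nonneg_right (by linarith) hF.le)

theorem stmt_16_general (N : ℕ) (ε : ℝ) (hε : ε = (N : ℝ)⁻¹)
    (φ : ℝ → ℝ) (hφ : ContDiffOn ℝ 2 φ (Set.Ioi 0)) (F : ℝ) (hF : 0 < F)
    (K : ℕ) (hK1 : 1 < K) (hK2 : K + 2 < N)
    (hφ1 : 0 ≤ deriv φ (2 * F)) (hφ2 : deriv (deriv φ) (2 * F) ≤ 0) :
    ∀ u : ℤ → ℝ × ℝ, IsDisp N u →
      d2E (EQNL N K ε φ) (yLin ε F) u u ≥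
        min (deriv (deriv φ) F + 4 * deriv (deriv φ) (2 * F)) (deriv φ F / F) *
          (ε * ∑ ℓ ∈ Finset.Icc (2 : ℤ) (K : ℤ), (enorm2 (bd ε u ℓ)) ^ 2)
        + min (deriv (deriv φ) F + 4 * deriv (deriv φ) (2 * F))
            ((deriv φ F + 2 * deriv φ (2 * F)) / F) *
          (ε * ∑ ℓ ∈ Finset.Icc ((K : ℤ) + 2) (N : ℤ), (enorm2 (bd ε u ℓ)) ^ 2)
        + min (deriv (deriv φ) F + 4 * deriv (deriv φ) (2 * F))
            ((deriv φ F + deriv φ (2 * F)) / F) *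
          (ε * (enorm2 (bd ε u 1)) ^ 2 + ε * (enorm2 (bd ε u ((K : ℤ) + 1))) ^ 2) ∧
      d2E (EQNL N K ε φ) (yLin ε F) u u ≥
        min (deriv (deriv φ) F + 4 * deriv (deriv φ) (2 * F)) (deriv φ F / F) *
          (nrm N ε (bd ε u)) ^ 2 := by
  intro u _
  have hε0 : 0 < ε := by
    rw [hε]
    exact inv_pos.mpr (by exact_mod_cast (by omega : 0 < N))
  have hK : 1 ≤ (K : ℤ) := by exact_mod_cast hK1.le
  have hKN : (K : ℤ) + 1 ≤ N := by exact_mod_cast (by omega : K + 1 ≤ N)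
  rw [d2E_EQNL_yLin hε0.ne' N K hφ hF u]
  have hregional := mul_le_mul_of_nonneg_left (qnlHessian_ge hF hφ1 hφ2 hK hKN (bd ε u)) hε0.le
  refine ⟨by linarith, ?_⟩
  have hnrm : nrm N ε (bd ε u) ^ 2 = ε * ∑ ℓ ∈ Icc (1 : ℤ) N, enorm2 (bd ε u ℓ) ^ 2 :=
    Real.sq_sqrt (by positivity)
  rw [sum_Icc_one_split _ hK hKN] at hnrm
  have hmC := min_div_le_min_add_div (deriv (deriv φ) F + 4 * deriv (deriv φ) (2 * F))
    (deriv φ F) hF (by linarith : 0 ≤ 2 * deriv φ (2 * F))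
  have hmI := min_div_le_min_add_div (deriv (deriv φ) F + 4 * deriv (deriv φ) (2 * F))
    (deriv φ F) hF hφ1
  have hC : 0 ≤ ε * ∑ ℓ ∈ Icc ((K : ℤ) + 2) N, enorm2 (bd ε u ℓ) ^ 2 := by positivity
  have hI : 0 ≤ ε * (enorm2 (bd ε u 1) ^ 2 + enorm2 (bd ε u (K + 1)) ^ 2) := by positivity
  rw [hnrm]
  linarith [mul_le_mul_of_nonneg_right hmC hC, mul_le_mul_of_nonneg_right hmI hI]

theorem stmt_16 (N : ℕ) (hN : 4 ≤ N) (ε : ℝ) (hε : ε = (N : ℝ)⁻¹)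
    (φ : ℝ → ℝ) (hφ : ContDiffOn ℝ 2 φ (Set.Ioi 0)) (F : ℝ) (hF : 0 < F)
    (K : ℕ) (hK1 : 1 < K) (hK2 : K + 2 < N)
    (hφ1 : 0 ≤ deriv φ (2 * F)) (hφ2 : deriv (deriv φ) (2 * F) ≤ 0) :
    ∀ u : ℤ → ℝ × ℝ, IsDisp N u →
      d2E (EQNL N K ε φ) (yLin ε F) u u ≥
        min (deriv (deriv φ) F + 4 * deriv (deriv φ) (2 * F)) (deriv φ F / F) *
          (ε * ∑ ℓ ∈ Finset.Icc (2 : ℤ) (K : ℤ), (enorm2 (bd ε u ℓ)) ^ 2)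
        + min (deriv (deriv φ) F + 4 * deriv (deriv φ) (2 * F))
            ((deriv φ F + 2 * deriv φ (2 * F)) / F) *
          (ε * ∑ ℓ ∈ Finset.Icc ((K : ℤ) + 2) (N : ℤ), (enorm2 (bd ε u ℓ)) ^ 2)
        + min (deriv (deriv φ) F + 4 * deriv (deriv φ) (2 * F))
            ((deriv φ F + deriv φ (2 * F)) / F) *
          (ε * (enorm2 (bd ε u 1)) ^ 2 + ε * (enorm2 (bd ε u ((K : ℤ) + 1))) ^ 2) ∧
      d2E (EQNL N K ε φ) (yLin ε F) u u ≥
        min (deriv (deriv φ) F + 4 * deriv (deriv φ) (2 * F)) (deriv φ F / F) *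
          (nrm N ε (bd ε u)) ^ 2 :=
  stmt_16_general N ε hε φ hφ F hF K hK1 hK2 hφ1 hφ2
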